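/- Closed form of the composed 2-down/β-up transform: let β ≠ 2 and let f be a probability density function on (0, x_f) ⊆ (0, ∞), and suppose u(x) = ∫_x^{x_f} |(β−2)t|^{1/(β−2)} f(t) dt is finite; let g = 𝔘_β[f] be the one-parameter up transform determined by u and g(u(x)) = |(β−2)x|^{1/(2−β)}. Define S(x) = (log x)/(2−β) and h(s) = |β−2| e^{(2−β)s} f( e^{(2−β)s} ) for s in the range of S, extended by 0. Then: (i) S'(x) = 1/((2−β)x) for all x ∈ (0, x_f); (ii) h(S(x)) · |S'(x)| = f(x) for all x ∈ (0, x_f), so that h is a probability density; and (iii) if f is differentiable, then h(S(x)) = g(u(x))² / |g'(u(x))| for all x ∈ (0, x_f), i.e., h is the 2-down transform of the β-up transform of f. -/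

import Mathlib

/-!
Put `c = |β - 2| x` and `r = 1 / (2 - β)`. On `(0, x_f)` the up transform reads `g (u x) = c ^ r`,
and by the fundamental theorem of calculus `u' (x) = -c ^ (-r) f x`. The chain rule for `g ∘ u`
then forces `|g' (u x)| = c ^ (r - 1) / (c ^ (-r) f x)` (in particular `f x ≠ 0`, because `c ^ r`
has nonvanishing derivative in `x`), whence `g (u x) ^ 2 / |g' (u x)| = c f x`. The same value is
`h (S x)`, because `exp ((2 - β) S x) = x`; and `h` is a density because `S` is a change of
variables with `h (S x) |S' x| = f x`.
-/

open MeasureTheory Set Filter Topology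

noncomputable section

/-- The open interval with extended-real endpoints, viewed as a set of reals. -/
def intIoo (a b : EReal) : Set ℝ := {x : ℝ | a < (x : EReal) ∧ (x : EReal) < b}

lemma isOpen_intIoo (a b : EReal) : IsOpen (intIoo a b) :=
  isOpen_Ioo.preimage continuous_coe_real_ereal

lemma pos_of_mem_intIoo_zero {b : EReal} {x : ℝ} (hx : x ∈ intIoo 0 b) : 0 < x :=
  EReal.coe_pos.mp hx.1

lemma intIoo_eq_Ioc_union {a b : ℝ} {c : EReal} (hab : a ≤ b) (hb : (b : EReal) < c) :
    intIoo a c = Ioc a b ∪ intIoo b c := by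
  ext t
  simp only [intIoo, mem_ofPred_eq, mem_union, mem_Ioc, EReal.coe_lt_coe_iff]
  constructor
  · rintro ⟨hat, htc⟩
    exact (le_or_gt t b).imp (fun htb => ⟨hat, htb⟩) fun hbt => ⟨hbt, htc⟩
  · rintro (⟨hat, htb⟩ | ⟨hbt, htc⟩)
    · exact ⟨hat, lt_of_le_of_lt (EReal.coe_le_coe_iff.mpr htb) hb⟩
    · exact ⟨hab.trans_lt hbt, htc⟩

lemma setIntegral_intIoo_eq_sub {F : ℝ → ℝ} {a x : ℝ} {c : EReal} (hax : a ≤ x)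
    (hxc : (x : EReal) < c) (hF : IntegrableOn F (intIoo a c)) :
    ∫ t in intIoo x c, F t = (∫ t in intIoo a c, F t) - ∫ t in a..x, F t := by
  have hdisj : Disjoint (Ioc a x) (intIoo x c) :=
    disjoint_left.mpr fun t ht ht' => not_lt.mpr ht.2 (EReal.coe_lt_coe_iff.mp ht'.1)
  rw [intIoo_eq_Ioc_union hax hxc] at hF ⊢
  rw [setIntegral_union hdisj (isOpen_intIoo _ _).measurableSet
    (hF.mono_set subset_union_left) (hF.mono_set subset_union_right),
    intervalIntegral.integral_of_le hax]
  ring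

lemma hasDerivAt_setIntegral_intIoo {F : ℝ → ℝ} {a x : ℝ} {c : EReal} (hax : a < x)
    (hxc : (x : EReal) < c) (hF : IntegrableOn F (intIoo a c))
    (hFm : StronglyMeasurableAtFilter F (𝓝 x)) (hFc : ContinuousAt F x) :
    HasDerivAt (fun y : ℝ => ∫ t in intIoo y c, F t) (-F x) x := by
  have hFax : IntervalIntegrable F volume a x :=
    (intervalIntegrable_iff_integrableOn_Ioc_of_le hax.le).mpr
      (hF.mono_set (intIoo_eq_Ioc_union hax.le hxc ▸ subset_union_left))
  have hnear : (fun y : ℝ => ∫ t in intIoo y c, F t) =ᶠ[𝓝 x]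
      fun y => (∫ t in intIoo a c, F t) - ∫ t in a..y, F t := by
    filter_upwards [(isOpen_intIoo a c).mem_nhds ⟨EReal.coe_lt_coe_iff.mpr hax, hxc⟩] with y hy
    exact setIntegral_intIoo_eq_sub (EReal.coe_lt_coe_iff.mp hy.1).le hy.2 hF
  exact ((intervalIntegral.integral_hasDerivAt_right hFax hFm hFc).const_sub _)
    |>.congr_of_eventuallyEq hnear

lemma hasDerivAt_of_eq_setIntegral_intIoo {F u : ℝ → ℝ} {c : EReal} {x : ℝ}
    (hx : x ∈ intIoo 0 c) (hF_int : ∀ y ∈ intIoo 0 c, IntegrableOn F (intIoo y c))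
    (hu : ∀ y ∈ intIoo 0 c, u y = ∫ t in intIoo y c, F t)
    (hF : ContinuousOn F (intIoo 0 c)) :
    HasDerivAt u (-F x) x := by
  have hx0 := pos_of_mem_intIoo_zero hx
  have hhalf : x / 2 ∈ intIoo 0 c :=
    ⟨EReal.coe_pos.mpr (half_pos hx0), (EReal.coe_lt_coe_iff.mpr (half_lt_self hx0)).trans hx.2⟩
  have hnhds := (isOpen_intIoo 0 c).mem_nhds hx
  exact (hasDerivAt_setIntegral_intIoo (half_lt_self hx0) hx.2 (hF_int _ hhalf)
    (hF.stronglyMeasurableAtFilter (isOpen_intIoo 0 c) x hx)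
    (hF.continuousAt hnhds)).congr_of_eventuallyEq (eventually_of_mem hnhds hu)

lemma hasDerivAt_log_div {x : ℝ} (hx : x ≠ 0) (k : ℝ) :
    HasDerivAt (fun y => Real.log y / k) (1 / (k * x)) x :=
  ((Real.hasDerivAt_log hx).div_const k).congr_deriv
    (by rw [one_div, mul_inv, div_eq_mul_inv, mul_comm])

lemma exp_mul_log_div {k x : ℝ} (hk : k ≠ 0) (hx : 0 < x) :
    Real.exp (k * (Real.log x / k)) = x := by
  rw [mul_div_cancel₀ _ hk, Real.exp_log hx]

lemma injOn_log_div {k : ℝ} (hk : k ≠ 0) : InjOn (fun y => Real.log y / k) (Ioi 0) :=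
  fun _ ha _ hb hab => Real.log_injOn_pos ha hb ((div_left_inj' hk).mp hab)

lemma hasDerivAt_mul_rpow {A x : ℝ} (hAx : 0 < A * x) (r : ℝ) :
    HasDerivAt (fun y => (A * y) ^ r) (r * (A * x) ^ (r - 1) * A) x :=
  (((hasDerivAt_id' x).const_mul A).rpow_const (Or.inl (by simpa using hAx.ne'))).congr_deriv
    (by ring)

lemma sq_div_abs_deriv_of_eventuallyEq_comp {φ g u : ℝ → ℝ} {φ' g' u' x : ℝ}
    (hφ : HasDerivAt φ φ' x) (hφ' : φ' ≠ 0) (hg : HasDerivAt g g' (u x)) (hu : HasDerivAt u u' x)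
    (hφgu : g ∘ u =ᶠ[𝓝 x] φ) :
    g (u x) ^ 2 / |g'| = φ x ^ 2 * |u'| / |φ'| := by
  have hφ'_eq : φ' = g' * u' := hφ.unique ((hg.comp x hu).congr_of_eventuallyEq hφgu.symm)
  have hu' : u' ≠ 0 := right_ne_zero_of_mul (hφ'_eq ▸ hφ')
  rw [← hφgu.eq_of_nhds, hφ'_eq, abs_mul, Function.comp_apply]
  field_simp

lemma rpow_sq_mul_rpow_neg_div_rpow_sub_one {c : ℝ} (hc : 0 < c) (r y : ℝ) :
    (c ^ r) ^ 2 * (c ^ (-r) * y) / c ^ (r - 1) = c * y := by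
  have hcr : c ^ r ≠ 0 := (Real.rpow_pos_of_pos hc r).ne'
  rw [Real.rpow_neg hc.le, Real.rpow_sub_one hc.ne']
  field_simp

lemma integral_eq_of_comp_mul_abs_deriv_eq {S S' h f : ℝ → ℝ} {U : Set ℝ} (hU : MeasurableSet U)
    (hS : ∀ x ∈ U, HasDerivAt S (S' x) x) (hSinj : InjOn S U) (hh0 : ∀ s ∉ S '' U, h s = 0)
    (hf0 : ∀ x ∉ U, f x = 0) (hhf : ∀ x ∈ U, h (S x) * |S' x| = f x) :
    ∫ s, h s = ∫ x, f x :=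
  calc ∫ s, h s = ∫ s in S '' U, h s := (setIntegral_eq_integral_of_forall_compl_eq_zero hh0).symm
    _ = ∫ x in U, |S' x| • h (S x) :=
        integral_image_eq_integral_abs_deriv_smul hU (fun x hx => (hS x hx).hasDerivWithinAt)
          hSinj h
    _ = ∫ x in U, f x :=
        setIntegral_congr_fun hU fun x hx => by rw [smul_eq_mul, mul_comm, hhf x hx]
    _ = ∫ x, f x := setIntegral_eq_integral_of_forall_compl_eq_zero hf0

lemma continuousOn_abs_mul_rpow_mul {f : ℝ → ℝ} {s : Set ℝ} {a : ℝ} (ha : a ≠ 0) (p : ℝ)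
    (hs : ∀ t ∈ s, t ≠ 0) (hf : ContinuousOn f s) :
    ContinuousOn (fun t => |a * t| ^ p * f t) s := fun t ht =>
  (((continuous_const_mul a).abs.continuousAt.rpow_const
    (Or.inl (abs_ne_zero.mpr (mul_ne_zero ha (hs t ht))))).continuousWithinAt).mul (hf t ht)

lemma up_transform_sq_div_abs_deriv {β x g' : ℝ} {f g u : ℝ → ℝ} (hβ : β ≠ 2) (hx : 0 < x)
    (hfx : 0 ≤ f x) (hu : HasDerivAt u (-(|(β - 2) * x| ^ ((1 : ℝ) / (β - 2)) * f x)) x)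
    (hgu : ∀ᶠ y in 𝓝 x, g (u y) = |(β - 2) * y| ^ ((1 : ℝ) / (2 - β)))
    (hg : HasDerivAt g g' (u x)) :
    g (u x) ^ 2 / |g'| = |β - 2| * x * f x := by
  set A := |β - 2|
  set r : ℝ := 1 / (2 - β)
  have hA : 0 < A := abs_pos.mpr (sub_ne_zero.mpr hβ)
  have hc : 0 < A * x := mul_pos hA hx
  have hr : r ≠ 0 := one_div_ne_zero (sub_ne_zero.mpr hβ.symm)
  have hrA : |r| * A = 1 := by
    rw [abs_div, abs_one, abs_sub_comm]
    exact one_div_mul_cancel hA.ne'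
  have hφgu : g ∘ u =ᶠ[𝓝 x] fun y => (A * y) ^ r := by
    filter_upwards [hgu, Ioi_mem_nhds hx] with y hy hy0
    rw [Function.comp_apply, hy, abs_mul, abs_of_pos (mem_Ioi.mp hy0)]
  have hφ' : r * (A * x) ^ (r - 1) * A ≠ 0 :=
    mul_ne_zero (mul_ne_zero hr (Real.rpow_pos_of_pos hc _).ne') hA.ne'
  have hF : |(β - 2) * x| ^ ((1 : ℝ) / (β - 2)) = (A * x) ^ (-r) := by
    rw [abs_mul, abs_of_pos hx, show (1 : ℝ) / (β - 2) = -r by rw [← neg_sub 2 β, div_neg]]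
  rw [sq_div_abs_deriv_of_eventuallyEq_comp (hasDerivAt_mul_rpow hc r) hφ' hg hu hφgu, abs_neg,
    hF, abs_mul, abs_of_nonneg (Real.rpow_nonneg hc.le _), abs_of_nonneg hfx, abs_mul, abs_mul,
    abs_of_pos (Real.rpow_pos_of_pos hc _), abs_of_pos hA, mul_right_comm, hrA, one_mul]
  exact rpow_sq_mul_rpow_neg_div_rpow_sub_one hc r (f x)

theorem down_two_up_transform_closed_form_general
    (β : ℝ) (hβ : β ≠ 2)
    (xf : EReal)
    (f g S h u : ℝ → ℝ)
    (hf_nonneg : ∀ x, 0 ≤ f x)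
    (hf_supp : ∀ x ∉ intIoo 0 xf, f x = 0)
    (hf_int : (∫ x, f x) = 1)
    (hu_fin : ∀ x ∈ intIoo 0 xf,
      IntegrableOn (fun t => |(β - 2) * t| ^ ((1 : ℝ) / (β - 2)) * f t)
        (intIoo (x : EReal) xf))
    (hu : ∀ x ∈ intIoo 0 xf,
      u x = ∫ t in intIoo (x : EReal) xf, |(β - 2) * t| ^ ((1 : ℝ) / (β - 2)) * f t)
    (hg : ∀ x ∈ intIoo 0 xf, g (u x) = |(β - 2) * x| ^ ((1 : ℝ) / (2 - β)))
    (hS : ∀ x, S x = Real.log x / (2 - β))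
    (hh : ∀ s ∈ S '' intIoo 0 xf,
      h s = |β - 2| * Real.exp ((2 - β) * s) * f (Real.exp ((2 - β) * s)))
    (hh0 : ∀ s ∉ S '' intIoo 0 xf, h s = 0) :
    (∀ x ∈ intIoo 0 xf, HasDerivAt S (1 / ((2 - β) * x)) x)
    ∧ (∀ x ∈ intIoo 0 xf, h (S x) * |1 / ((2 - β) * x)| = f x)
    ∧ ((∀ s, 0 ≤ h s) ∧ (∫ s, h s) = 1)
    ∧ (∀ f' : ℝ → ℝ, (∀ x ∈ intIoo 0 xf, HasDerivAt f (f' x) x) →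
        ∀ g' : ℝ → ℝ, (∀ x ∈ intIoo 0 xf, HasDerivAt g (g' (u x)) (u x)) →
        ∀ x ∈ intIoo 0 xf, h (S x) = g (u x) ^ 2 / |g' (u x)|) := by
  have hk : (2 : ℝ) - β ≠ 0 := sub_ne_zero.mpr hβ.symm
  obtain rfl : S = fun x => Real.log x / (2 - β) := funext hS
  have hpos : ∀ x ∈ intIoo 0 xf, 0 < x := fun _ => pos_of_mem_intIoo_zero
  have hhS : ∀ x ∈ intIoo 0 xf, h (Real.log x / (2 - β)) = |β - 2| * x * f x := fun x hx => by
    rw [hh _ (mem_image_of_mem _ hx), exp_mul_log_div hk (hpos x hx)]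
  have hS' : ∀ x ∈ intIoo 0 xf, HasDerivAt (fun x => Real.log x / (2 - β)) (1 / ((2 - β) * x)) x :=
    fun x hx => hasDerivAt_log_div (hpos x hx).ne' _
  have hdens : ∀ x ∈ intIoo 0 xf, h (Real.log x / (2 - β)) * |1 / ((2 - β) * x)| = f x :=
    fun x hx => by
      rw [hhS x hx, abs_div, abs_one, abs_mul, abs_of_pos (hpos x hx), abs_sub_comm]
      have := (hpos x hx).ne'
      field_simp
  refine ⟨hS', hdens, ⟨fun s => ?_, ?_⟩, fun f' hf' g' hg' x hx => ?_⟩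
  · by_cases hs : s ∈ (fun x => Real.log x / (2 - β)) '' intIoo 0 xf
    · rw [hh s hs]
      exact mul_nonneg (mul_nonneg (abs_nonneg _) (Real.exp_pos _).le) (hf_nonneg _)
    · rw [hh0 s hs]
  · rw [integral_eq_of_comp_mul_abs_deriv_eq (isOpen_intIoo 0 xf).measurableSet hS'
      ((injOn_log_div hk).mono hpos) hh0 hf_supp hdens, hf_int]
  · have hF := continuousOn_abs_mul_rpow_mul (sub_ne_zero.mpr hβ) ((1 : ℝ) / (β - 2))
      (fun t ht => (hpos t ht).ne') fun t ht => (hf' t ht).continuousAt.continuousWithinAt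
    rw [hhS x hx]
    exact (up_transform_sq_div_abs_deriv hβ (hpos x hx) (hf_nonneg x)
      (hasDerivAt_of_eq_setIntegral_intIoo hx hu_fin hu hF)
      (eventually_of_mem ((isOpen_intIoo 0 xf).mem_nhds hx) hg) (hg' x hx)).symm

/-- closed form of the composed `2`-down/`β`-up transform
`𝔇₂𝔘_β[f] = 𝔊̃_{2-β}[f]`. -/
theorem down_two_up_transform_closed_form
    (β : ℝ) (hβ : β ≠ 2)
    (xf : EReal) (hxf : (0 : EReal) < xf)
    (f g S h u : ℝ → ℝ)
    (hf_meas : Measurable f)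
    (hf_nonneg : ∀ x, 0 ≤ f x)
    (hf_supp : ∀ x ∉ intIoo 0 xf, f x = 0)
    (hf_int : (∫ x, f x) = 1)
    (hu_fin : ∀ x ∈ intIoo 0 xf,
      IntegrableOn (fun t => |(β - 2) * t| ^ ((1 : ℝ) / (β - 2)) * f t)
        (intIoo (x : EReal) xf))
    (hu : ∀ x ∈ intIoo 0 xf,
      u x = ∫ t in intIoo (x : EReal) xf, |(β - 2) * t| ^ ((1 : ℝ) / (β - 2)) * f t)
    (hg : ∀ x ∈ intIoo 0 xf, g (u x) = |(β - 2) * x| ^ ((1 : ℝ) / (2 - β)))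
    (hS : ∀ x, S x = Real.log x / (2 - β))
    (hh : ∀ s ∈ S '' intIoo 0 xf,
      h s = |β - 2| * Real.exp ((2 - β) * s) * f (Real.exp ((2 - β) * s)))
    (hh0 : ∀ s ∉ S '' intIoo 0 xf, h s = 0) :
    (∀ x ∈ intIoo 0 xf, HasDerivAt S (1 / ((2 - β) * x)) x)
    ∧ (∀ x ∈ intIoo 0 xf, h (S x) * |1 / ((2 - β) * x)| = f x)
    ∧ ((∀ s, 0 ≤ h s) ∧ (∫ s, h s) = 1)
    ∧ (∀ f' : ℝ → ℝ, (∀ x ∈ intIoo 0 xf, HasDerivAt f (f' x) x) →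
        ∀ g' : ℝ → ℝ, (∀ x ∈ intIoo 0 xf, HasDerivAt g (g' (u x)) (u x)) →
        ∀ x ∈ intIoo 0 xf, h (S x) = g (u x) ^ 2 / |g' (u x)|) :=
  down_two_up_transform_closed_form_general β hβ xf f g S h u hf_nonneg hf_supp hf_int hu_fin hu hg
    hS hh hh0
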